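/- In SL(2,ℂ), let A = [[ω, 1],[0, ω²]] and B = [[ω, 0],[z, ω²]] where ω is a primitive cube root of unity and z ∈ ℂ. Then tr(AB) = z − 1, and the image of AB in PSL(2,ℂ) has order 6 if and only if tr(AB)² = 3, i.e. z = 1 + √3 or z = 1 − √3. -/

import Mathlib

/-!
For `M ∈ SL(2, K)` with trace `t`, Cayley–Hamilton gives `M² = t M - 1`, hence
`Mⁿ = S_{n-1}(t) M - S_{n-2}(t)` with `S` the Chebyshev polynomials normalised by
`S_{n+1} = X S_n - S_{n-1}`. When `M` is not scalar, `M` and `1` are linearly independent, so the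
image of `M` in `PSL(2, K)` satisfies `xⁿ = 1` exactly when `S_{n-1}(t) = 0`. As `S₁ = t`,
`S₂ = t² - 1` and `S₅ = t (t² - 1) (t² - 3)`, the image has order `6` iff `t² = 3`; a scalar `M`
has trivial image and `t² = 4`.
-/

open Matrix

abbrev PSL2C := SpecialLinearGroup (Fin 2) ℂ ⧸ Subgroup.center (SpecialLinearGroup (Fin 2) ℂ)

open Polynomial Polynomial.Chebyshev Subgroup

theorem orderOf_eq_six_iff {G : Type*} [Monoid G] (x : G) :
    orderOf x = 6 ↔ x ^ 6 = 1 ∧ x ^ 2 ≠ 1 ∧ x ^ 3 ≠ 1 := by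
  simp only [← orderOf_dvd_iff_pow_eq_one, ne_eq]
  refine ⟨fun h ↦ by simp [h], fun ⟨h6, h2, h3⟩ ↦ ?_⟩
  have h : orderOf x ∈ Nat.divisors 6 := Nat.mem_divisors.2 ⟨h6, by norm_num⟩
  rw [show Nat.divisors 6 = {1, 2, 3, 6} by decide] at h
  simp only [Finset.mem_insert, Finset.mem_singleton] at h
  rcases h with h | h | h | h <;> simp_all

theorem Polynomial.Chebyshev.S_five (R : Type*) [CommRing R] :
    S R 5 = X * (X ^ 2 - 1) * (X ^ 2 - 3) := by
  have h3 : S R 3 = X * S R 2 - S R 1 := S_add_two R 1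
  have h4 : S R 4 = X * S R 3 - S R 2 := S_add_two R 2
  have h5 : S R 5 = X * S R 4 - S R 3 := S_add_two R 3
  rw [h5, h4, h3, S_two, S_one]
  ring

namespace Matrix

theorem sq_eq_trace_smul_sub_one {R : Type*} [CommRing R] [Nontrivial R]
    {M : Matrix (Fin 2) (Fin 2) R} (hM : M.det = 1) : M ^ 2 = M.trace • M - 1 := by
  have h := M.aeval_self_charpoly
  rw [charpoly_fin_two, hM] at h
  simp only [map_add, map_sub, map_pow, aeval_X, map_mul, Polynomial.aeval_C, map_one,
    ← Algebra.smul_def] at h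
  rw [← sub_eq_zero, ← h]
  abel

theorem pow_eq_chebyshevS {R : Type*} [CommRing R] [Nontrivial R]
    {M : Matrix (Fin 2) (Fin 2) R} (hM : M.det = 1) (n : ℕ) :
    M ^ n = (S R (n - 1)).eval M.trace • M - (S R (n - 2)).eval M.trace • 1 := by
  induction n with
  | zero => simp
  | succ n ih =>
    rw [pow_succ, ih, sub_mul, smul_mul_assoc, smul_mul_assoc, ← sq,
      sq_eq_trace_smul_sub_one hM, one_mul]
    push_cast
    rw [add_sub_cancel_right, show (n : ℤ) + 1 - 2 = n - 1 by ring, S_eq R n]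
    simp only [eval_sub, eval_mul, eval_X]
    module

theorem smul_sub_smul_one_mem_range_scalar_iff {n K : Type*} [Fintype n] [DecidableEq n]
    [Field K] {M : Matrix n n K} (hM : M ∉ Set.range (scalar n)) (a b : K) :
    a • M - b • 1 ∈ Set.range (scalar n) ↔ a = 0 := by
  refine ⟨fun ⟨r, hr⟩ ↦ by_contra fun ha ↦ hM ⟨a⁻¹ * (r + b), ?_⟩, ?_⟩
  · rw [map_mul, map_add, hr]
    simp [smul_one_eq_diagonal, ← smul_eq_diagonal_mul, ha]
  · rintro rfl
    exact ⟨-b, by simp [smul_one_eq_diagonal]⟩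

namespace SpecialLinearGroup

theorem mem_center_iff_mem_range_scalar {n R : Type*} [Fintype n] [DecidableEq n] [CommRing R]
    {A : SpecialLinearGroup n R} :
    A ∈ center (SpecialLinearGroup n R) ↔ (A : Matrix n n R) ∈ Set.range (scalar n) := by
  refine mem_center_iff.trans ⟨fun ⟨r, _, hr⟩ ↦ ⟨r, hr⟩, fun ⟨r, hr⟩ ↦ ⟨r, ?_, hr⟩⟩
  simpa [← hr] using A.det_coe

variable {K : Type*} [Field K]

theorem mk_pow_eq_one_iff {M : SpecialLinearGroup (Fin 2) K}
    (hM : (M : Matrix (Fin 2) (Fin 2) K) ∉ Set.range (scalar (Fin 2))) (n : ℕ) :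
    (QuotientGroup.mk M :
      SpecialLinearGroup (Fin 2) K ⧸ center (SpecialLinearGroup (Fin 2) K)) ^ n = 1 ↔
      (S K (n - 1)).eval (M : Matrix (Fin 2) (Fin 2) K).trace = 0 := by
  rw [← QuotientGroup.mk_pow, QuotientGroup.eq_one_iff, mem_center_iff_mem_range_scalar, coe_pow,
    pow_eq_chebyshevS M.det_coe, smul_sub_smul_one_mem_range_scalar_iff hM]

theorem orderOf_mk_eq_six_iff (h2 : (2 : K) ≠ 0) (h3 : (3 : K) ≠ 0)
    (M : SpecialLinearGroup (Fin 2) K) :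
    orderOf (QuotientGroup.mk M :
      SpecialLinearGroup (Fin 2) K ⧸ center (SpecialLinearGroup (Fin 2) K)) = 6 ↔
      (M : Matrix (Fin 2) (Fin 2) K).trace ^ 2 = 3 := by
  by_cases hM : (M : Matrix (Fin 2) (Fin 2) K) ∈ Set.range (scalar (Fin 2))
  · have hc := mem_center_iff_mem_range_scalar.2 hM
    obtain ⟨r, hr2, hr⟩ := mem_center_iff.1 hc
    rw [Fintype.card_fin] at hr2
    rw [(QuotientGroup.eq_one_iff M).2 hc, orderOf_one, ← hr, scalar_apply, trace_diagonal,
      Finset.sum_const, Finset.card_univ, Fintype.card_fin, nsmul_eq_mul, Nat.cast_ofNat]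
    exact iff_of_false (by norm_num) fun h ↦
      one_ne_zero (by linear_combination h - 4 * hr2 : (1 : K) = 0)
  · rw [orderOf_eq_six_iff, ne_eq, ne_eq, mk_pow_eq_one_iff hM, mk_pow_eq_one_iff hM,
      mk_pow_eq_one_iff hM]
    norm_num [S_five, S_one, S_two]
    generalize (M : Matrix (Fin 2) (Fin 2) K).trace = t
    constructor
    · rintro ⟨(h | h) | h, ht0, ht1⟩
      exacts [absurd h ht0, absurd h ht1, sub_eq_zero.1 h]
    · intro ht
      refine ⟨Or.inr (sub_eq_zero.2 ht), fun ht0 ↦ h3 ?_, fun ht1 ↦ h2 ?_⟩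
      · linear_combination t * ht0 - ht
      · linear_combination ht1 - ht

end SpecialLinearGroup

end Matrix

theorem Complex.sub_one_sq_eq_three_iff (z : ℂ) :
    (z - 1) ^ 2 = 3 ↔ z = 1 + (Real.sqrt 3 : ℂ) ∨ z = 1 - (Real.sqrt 3 : ℂ) := by
  have h : ((Real.sqrt 3 : ℝ) : ℂ) ^ 2 = 3 := by
    norm_cast
    exact Real.sq_sqrt (by norm_num)
  rw [← h, sq_eq_sq_iff_eq_or_eq_neg, sub_eq_iff_eq_add', sub_eq_iff_eq_add', ← sub_eq_add_neg]

/-- for `A = [[ω,1],[0,ω²]]`, `B = [[ω,0],[z,ω²]]` with `ω` a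
primitive cube root of unity, `tr(AB) = z − 1`, and the image of `AB` in
`PSL(2,ℂ)` has order 6 iff `tr(AB)² = 3`, i.e. iff `z = 1 + √3` or `z = 1 − √3`. -/
theorem stmt14 (ω z : ℂ) (hω : ω ^ 3 = 1) (hω1 : ω ≠ 1)
    (A B : Matrix (Fin 2) (Fin 2) ℂ)
    (hA : A = !![ω, 1; 0, ω ^ 2]) (hB : B = !![ω, 0; z, ω ^ 2]) :
    Matrix.trace (A * B) = z - 1 ∧
    (∀ M : SpecialLinearGroup (Fin 2) ℂ, (M : Matrix (Fin 2) (Fin 2) ℂ) = A * B →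
      (orderOf ((QuotientGroup.mk M : PSL2C)) = 6 ↔ Matrix.trace (A * B) ^ 2 = 3)) ∧
    ((z - 1) ^ 2 = 3 ↔ z = 1 + (Real.sqrt 3 : ℂ) ∨ z = 1 - (Real.sqrt 3 : ℂ)) := by
  have hω2 : ω ^ 2 + ω + 1 = 0 :=
    (mul_eq_zero.1 (by linear_combination hω : (ω - 1) * (ω ^ 2 + ω + 1) = 0)).resolve_left
      (sub_ne_zero.2 hω1)
  refine ⟨?_, fun M hM ↦ ?_, Complex.sub_one_sq_eq_three_iff z⟩
  · rw [hA, hB, mul_fin_two, trace_fin_two_of]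
    linear_combination hω2 + ω * hω
  · rw [← hM]
    exact SpecialLinearGroup.orderOf_mk_eq_six_iff two_ne_zero three_ne_zero M
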